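/- arXiv:1508.02243 — 2 statements merged into one kernel-verified Lean document; each statement's English description precedes it below -/
import Mathlib

section
/- For every Kepler solution r : I → ℝ³ and every t ∈ I with h(t) ≠ 0, the velocity is determined by the position, the angular momentum and the eccentricity vector through the formula ṙ(t) = μ · (h(t)/|h(t)|²) × (e(t) + r(t)/|r(t)|). -/
open scoped InnerProductSpace

/-- Cross product in ℝ³ (modelled as `EuclideanSpace ℝ (Fin 3)`). -/
noncomputable def cross3 (a b : EuclideanSpace ℝ (Fin 3)) : EuclideanSpace ℝ (Fin 3) :=
  (WithLp.equiv 2 (Fin 3 → ℝ)).symm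
    ![a 1 * b 2 - a 2 * b 1, a 2 * b 0 - a 0 * b 2, a 0 * b 1 - a 1 * b 0]

/-- The vector (x, y, z) ∈ ℝ³. -/
noncomputable def v3 (x y z : ℝ) : EuclideanSpace ℝ (Fin 3) :=
  (WithLp.equiv 2 (Fin 3 → ℝ)).symm ![x, y, z]

/-! Since `e + r/‖r‖ = (ṙ × h)/μ`, the right-hand side is `(h × (ṙ × h))/‖h‖²`, and the
vector triple product expansion reduces this to `ṙ`, because `h = r × ṙ` is orthogonal to `ṙ`. -/

open scoped Matrix

theorem cross3_eq_toLp_crossProduct (a b : EuclideanSpace ℝ (Fin 3)) :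
    cross3 a b = WithLp.toLp 2 (a.ofLp ⨯₃ b.ofLp) := by
  rw [cross_apply]
  rfl

theorem cross3_smul_left (c : ℝ) (a b : EuclideanSpace ℝ (Fin 3)) :
    cross3 (c • a) b = c • cross3 a b := by
  simp only [cross3_eq_toLp_crossProduct, WithLp.ofLp_smul, map_smul, LinearMap.smul_apply,
    WithLp.toLp_smul]

theorem cross3_smul_right (c : ℝ) (a b : EuclideanSpace ℝ (Fin 3)) :
    cross3 a (c • b) = c • cross3 a b := by
  simp only [cross3_eq_toLp_crossProduct, WithLp.ofLp_smul, map_smul, WithLp.toLp_smul]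

theorem inner_cross3_self_right (a b : EuclideanSpace ℝ (Fin 3)) : ⟪b, cross3 a b⟫_ℝ = 0 := by
  rw [EuclideanSpace.inner_eq_star_dotProduct, cross3_eq_toLp_crossProduct, star_trivial,
    dotProduct_comm]
  exact dot_cross_self _ _

theorem cross3_cross3 (u v w : EuclideanSpace ℝ (Fin 3)) :
    cross3 u (cross3 v w) = ⟪u, w⟫_ℝ • v - ⟪v, u⟫_ℝ • w := by
  simp only [cross3_eq_toLp_crossProduct, cross_cross_eq_smul_sub_smul',
    EuclideanSpace.inner_eq_star_dotProduct, star_trivial, dotProduct_comm]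
  rfl

theorem cross3_cross3_cross3_self (a b : EuclideanSpace ℝ (Fin 3)) :
    cross3 (cross3 a b) (cross3 b (cross3 a b)) = ‖cross3 a b‖ ^ 2 • b := by
  rw [cross3_cross3, inner_cross3_self_right, zero_smul, sub_zero, real_inner_self_eq_norm_sq]

theorem velocity_formula_general
(μ : ℝ) (hμ : 0 < μ)
    (r : ℝ → EuclideanSpace ℝ (Fin 3))
    (t : ℝ) (hh : cross3 (r t) (deriv r t) ≠ 0) :
    deriv r t =
      μ • cross3 ((‖cross3 (r t) (deriv r t)‖ ^ 2)⁻¹ • cross3 (r t) (deriv r t))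
        ((μ⁻¹ • cross3 (deriv r t) (cross3 (r t) (deriv r t)) - ‖r t‖⁻¹ • r t) +
          ‖r t‖⁻¹ • r t) := by
  have hnorm : ‖cross3 (r t) (deriv r t)‖ ^ 2 ≠ 0 := by positivity
  have hscalar :
      μ * (‖cross3 (r t) (deriv r t)‖ ^ 2)⁻¹ * μ⁻¹ * ‖cross3 (r t) (deriv r t)‖ ^ 2 = 1 := by
    field_simp
  rw [sub_add_cancel, cross3_smul_left, cross3_smul_right, cross3_cross3_cross3_self,
    smul_smul, smul_smul, smul_smul, hscalar, one_smul]

/-- For every Kepler solution and every t ∈ I with h(t) ≠ 0, the velocity satisfies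
ṙ(t) = μ · (h(t)/|h(t)|²) × (e(t) + r(t)/|r(t)|). -/
theorem velocity_formula
(μ : ℝ) (hμ : 0 < μ) (I : Set ℝ) (hIopen : IsOpen I) (hIconn : I.OrdConnected)
    (r : ℝ → EuclideanSpace ℝ (Fin 3))
    (hdiff : ∀ t ∈ I, DifferentiableAt ℝ r t)
    (hdiff' : ∀ t ∈ I, DifferentiableAt ℝ (deriv r) t)
    (hne : ∀ t ∈ I, r t ≠ 0)
    (hode : ∀ t ∈ I, deriv (deriv r) t = -(μ / ‖r t‖ ^ 3) • r t)
    (t : ℝ) (ht : t ∈ I) (hh : cross3 (r t) (deriv r t) ≠ 0) :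
    deriv r t =
      μ • cross3 ((‖cross3 (r t) (deriv r t)‖ ^ 2)⁻¹ • cross3 (r t) (deriv r t))
        ((μ⁻¹ • cross3 (deriv r t) (cross3 (r t) (deriv r t)) - ‖r t‖⁻¹ • r t) +
          ‖r t‖⁻¹ • r t) :=
  velocity_formula_general μ hμ r t hh
end

section
/- Normalized orbit equations: let r : I → ℝ³ be a Kepler solution and t ∈ I a time with h(t) ≠ 0. Define l = √μ · h(t)/|h(t)|², s = l × e(t), and the unit position vector r̂ = r(t)/|r(t)|. Then the normalized velocity satisfies ṙ(t)/√μ = s + l × r̂, and the inverse radius satisfies 1/|r(t)| = |l|² + (s × l) · r̂. -/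
/-!
Write `h = r × ṙ` and `e` for the eccentricity vector at time `t`. Both identities are algebraic
in the state `(r, ṙ)`. The vector `h` is orthogonal to `r`, `ṙ`, `ṙ × h` and hence to `e`, so
the BAC–CAB rule gives `l × (e + r̂) = l × (ṙ × h) / μ = ṙ / √μ` and `s × l = |l|² e`. The triple
product gives `e · r = |h|² / μ - |r|`, and `|l|² = μ / |h|²` turns this into the radius equation.
-/

open scoped InnerProductSpace

open Matrix WithLp

section Cross3

variable (x y z : EuclideanSpace ℝ (Fin 3))

theorem cross3_eq_crossProduct : cross3 x y = toLp 2 (ofLp x ⨯₃ ofLp y) := rfl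

theorem real_inner_eq_dotProduct : ⟪x, y⟫_ℝ = ofLp x ⬝ᵥ ofLp y := by
  rw [EuclideanSpace.inner_eq_star_dotProduct, star_trivial, dotProduct_comm]

theorem cross3_zero_left : cross3 0 y = 0 := by
  simp [cross3_eq_crossProduct]

theorem cross3_add_right : cross3 x (y + z) = cross3 x y + cross3 x z := by
  simp [cross3_eq_crossProduct]

theorem cross3_smul_left_s9 (c : ℝ) : cross3 (c • x) y = c • cross3 x y := by
  simp [cross3_eq_crossProduct]

theorem cross3_smul_right_s9 (c : ℝ) : cross3 x (c • y) = c • cross3 x y := by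
  simp [cross3_eq_crossProduct]

theorem inner_self_cross3 : ⟪x, cross3 x y⟫_ℝ = 0 := by
  simp [real_inner_eq_dotProduct, cross3_eq_crossProduct, dot_self_cross]

theorem inner_cross3_self : ⟪y, cross3 x y⟫_ℝ = 0 := by
  simp [real_inner_eq_dotProduct, cross3_eq_crossProduct, dot_cross_self]

theorem inner_cross3_permutation : ⟪x, cross3 y z⟫_ℝ = ⟪y, cross3 z x⟫_ℝ := by
  simp only [real_inner_eq_dotProduct, cross3_eq_crossProduct]
  exact triple_product_permutation _ _ _

theorem cross3_cross3_eq_smul_sub_smul :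
    cross3 (cross3 x y) z = ⟪x, z⟫_ℝ • y - ⟪y, z⟫_ℝ • x := by
  simp [real_inner_eq_dotProduct, cross3_eq_crossProduct, cross_cross_eq_smul_sub_smul]

theorem cross3_cross3_eq_smul_sub_smul' :
    cross3 x (cross3 y z) = ⟪x, z⟫_ℝ • y - ⟪y, x⟫_ℝ • z := by
  simp [real_inner_eq_dotProduct, cross3_eq_crossProduct, cross_cross_eq_smul_sub_smul']

end Cross3

noncomputable def eccentricityVector (μ : ℝ) (r v : EuclideanSpace ℝ (Fin 3)) :
    EuclideanSpace ℝ (Fin 3) :=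
  μ⁻¹ • cross3 v (cross3 r v) - ‖r‖⁻¹ • r

noncomputable def normalizedAngularMomentum (μ : ℝ) (r v : EuclideanSpace ℝ (Fin 3)) :
    EuclideanSpace ℝ (Fin 3) :=
  (Real.sqrt μ / ‖cross3 r v‖ ^ 2) • cross3 r v

section Kepler

variable (μ : ℝ) (r v : EuclideanSpace ℝ (Fin 3))

theorem inner_cross3_eccentricityVector :
    ⟪cross3 r v, eccentricityVector μ r v⟫_ℝ = 0 := by
  rw [eccentricityVector, inner_sub_right, real_inner_smul_right, real_inner_smul_right,
    inner_cross3_self, real_inner_comm, inner_self_cross3, mul_zero, mul_zero, sub_zero]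

theorem inner_eccentricityVector_self :
    ⟪eccentricityVector μ r v, r⟫_ℝ = ‖cross3 r v‖ ^ 2 / μ - ‖r‖ := by
  have hvhr : ⟪cross3 v (cross3 r v), r⟫_ℝ = ‖cross3 r v‖ ^ 2 := by
    rw [real_inner_comm, inner_cross3_permutation, inner_cross3_permutation,
      real_inner_self_eq_norm_sq]
  have hrr : ‖r‖⁻¹ * ‖r‖ ^ 2 = ‖r‖ := by rw [sq, ← mul_assoc, inv_mul_mul_self]
  rw [eccentricityVector, inner_sub_left, real_inner_smul_left, real_inner_smul_left, hvhr,
    real_inner_self_eq_norm_sq, hrr, inv_mul_eq_div]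

variable {μ r v}

theorem norm_normalizedAngularMomentum_sq (hμ : 0 ≤ μ) (hh : cross3 r v ≠ 0) :
    ‖normalizedAngularMomentum μ r v‖ ^ 2 = μ / ‖cross3 r v‖ ^ 2 := by
  have hH : ‖cross3 r v‖ ≠ 0 := norm_ne_zero_iff.mpr hh
  rw [normalizedAngularMomentum, norm_smul, mul_pow, Real.norm_eq_abs, sq_abs, div_pow,
    Real.sq_sqrt hμ]
  field_simp

theorem inv_sqrt_smul_eq_cross3_add_cross3 (hμ : 0 < μ) (hh : cross3 r v ≠ 0) :
    (Real.sqrt μ)⁻¹ • v = cross3 (normalizedAngularMomentum μ r v) (eccentricityVector μ r v)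
      + cross3 (normalizedAngularMomentum μ r v) (‖r‖⁻¹ • r) := by
  have hH : ‖cross3 r v‖ ≠ 0 := norm_ne_zero_iff.mpr hh
  have hsqrt : Real.sqrt μ ≠ 0 := (Real.sqrt_pos.mpr hμ).ne'
  have hhvh : cross3 (cross3 r v) (cross3 v (cross3 r v)) = ‖cross3 r v‖ ^ 2 • v := by
    rw [cross3_cross3_eq_smul_sub_smul', real_inner_self_eq_norm_sq, inner_cross3_self,
      zero_smul, sub_zero]
  rw [← cross3_add_right, eccentricityVector, sub_add_cancel, normalizedAngularMomentum,
    cross3_smul_left_s9, cross3_smul_right_s9, hhvh, smul_smul, smul_smul]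
  congr 1
  field_simp
  exact (Real.sq_sqrt hμ.le).symm

theorem inv_norm_eq_norm_normalizedAngularMomentum_sq_add (hμ : 0 < μ) (hh : cross3 r v ≠ 0) :
    ‖r‖⁻¹ = ‖normalizedAngularMomentum μ r v‖ ^ 2 +
      ⟪cross3 (cross3 (normalizedAngularMomentum μ r v) (eccentricityVector μ r v))
        (normalizedAngularMomentum μ r v), ‖r‖⁻¹ • r⟫_ℝ := by
  have hr : ‖r‖ ≠ 0 := by
    rintro hr
    rw [norm_eq_zero.mp hr, cross3_zero_left] at hh
    exact hh rfl
  have hH : ‖cross3 r v‖ ≠ 0 := norm_ne_zero_iff.mpr hh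
  have hle : ⟪eccentricityVector μ r v, normalizedAngularMomentum μ r v⟫_ℝ = 0 := by
    rw [normalizedAngularMomentum, real_inner_smul_right, real_inner_comm,
      inner_cross3_eccentricityVector, mul_zero]
  rw [cross3_cross3_eq_smul_sub_smul, hle, zero_smul, sub_zero, real_inner_smul_left,
    real_inner_smul_right, real_inner_self_eq_norm_sq, inner_eccentricityVector_self,
    norm_normalizedAngularMomentum_sq hμ.le hh]
  field_simp
  ring

end Kepler

theorem normalized_orbit_equations_general
(μ : ℝ) (hμ : 0 < μ)
    (r : ℝ → EuclideanSpace ℝ (Fin 3))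
    (t : ℝ) (hh : cross3 (r t) (deriv r t) ≠ 0)
    (l s rhat : EuclideanSpace ℝ (Fin 3))
    (hl : l = (Real.sqrt μ / ‖cross3 (r t) (deriv r t)‖ ^ 2) • cross3 (r t) (deriv r t))
    (hs : s = cross3 l
      (μ⁻¹ • cross3 (deriv r t) (cross3 (r t) (deriv r t)) - ‖r t‖⁻¹ • r t))
    (hrhat : rhat = ‖r t‖⁻¹ • r t) :
    (Real.sqrt μ)⁻¹ • deriv r t = s + cross3 l rhat ∧
    ‖r t‖⁻¹ = ‖l‖ ^ 2 + ⟪cross3 s l, rhat⟫_ℝ := by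
  subst hl hs hrhat
  exact ⟨inv_sqrt_smul_eq_cross3_add_cross3 hμ hh,
    inv_norm_eq_norm_normalizedAngularMomentum_sq_add hμ hh⟩

/-- Normalized orbit equations: with l = √μ·h(t)/|h(t)|², s = l × e(t) and
r̂ = r(t)/|r(t)|, one has ṙ(t)/√μ = s + l × r̂ and 1/|r(t)| = |l|² + (s × l)·r̂. -/
theorem normalized_orbit_equations
(μ : ℝ) (hμ : 0 < μ) (I : Set ℝ) (hIopen : IsOpen I) (hIconn : I.OrdConnected)
    (r : ℝ → EuclideanSpace ℝ (Fin 3))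
    (hdiff : ∀ t ∈ I, DifferentiableAt ℝ r t)
    (hdiff' : ∀ t ∈ I, DifferentiableAt ℝ (deriv r) t)
    (hne : ∀ t ∈ I, r t ≠ 0)
    (hode : ∀ t ∈ I, deriv (deriv r) t = -(μ / ‖r t‖ ^ 3) • r t)
    (t : ℝ) (ht : t ∈ I) (hh : cross3 (r t) (deriv r t) ≠ 0)
    (l s rhat : EuclideanSpace ℝ (Fin 3))
    (hl : l = (Real.sqrt μ / ‖cross3 (r t) (deriv r t)‖ ^ 2) • cross3 (r t) (deriv r t))
    (hs : s = cross3 l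
      (μ⁻¹ • cross3 (deriv r t) (cross3 (r t) (deriv r t)) - ‖r t‖⁻¹ • r t))
    (hrhat : rhat = ‖r t‖⁻¹ • r t) :
    (Real.sqrt μ)⁻¹ • deriv r t = s + cross3 l rhat ∧
    ‖r t‖⁻¹ = ‖l‖ ^ 2 + ⟪cross3 s l, rhat⟫_ℝ :=
  normalized_orbit_equations_general μ hμ r t hh l s rhat hl hs hrhat
end
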